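/- Let a₁, a₂, a₃, a₄ ∈ ℂ and define h(t) = (1/4)(1/(t − a₁) + 1/(t − a₂) + 1/(t − a₃) + 1/(t − a₄)) on V = ℂ \ {a₁, a₂, a₃, a₄}. Then h satisfies h'''' + 20 h h''' − 24 h' h'' + 96 h² h'' − 144 h (h')² + 64 (h' + h²)(h'' + 6 h h' + 4 h³) = 0 at every point of V. -/

import Mathlib

/-!
Since `(d/dt)^k (t - a)⁻¹ = (-1)^k k! (t - a)^{-(k+1)}`, the jet `h, h', …, h''''` at `t` is
`(-1)^k k!/4` times the power sums `∑ xᵢ^(k+1)` of `xᵢ = (t - aᵢ)⁻¹`. Substituted into the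
equation, these give a polynomial identity in `x₁, …, x₄`.
-/

open Finset Nat

theorem iteratedDeriv_sum_inv_sub {𝕜 ι : Type*} [NontriviallyNormedField 𝕜] (S : Finset ι)
    (a : ι → 𝕜) {t : 𝕜} (ht : ∀ i ∈ S, t ≠ a i) (k : ℕ) :
    iteratedDeriv k (fun s ↦ ∑ i ∈ S, (s - a i)⁻¹) t =
      (-1) ^ k * k ! * ∑ i ∈ S, (t - a i)⁻¹ ^ (k + 1) := by
  have hsmooth : ∀ i ∈ S, ContDiffAt 𝕜 k (fun s ↦ (s - a i)⁻¹) t := fun i hi ↦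
    (contDiffAt_id.sub contDiffAt_const).inv (sub_ne_zero.2 (ht i hi))
  rw [iteratedDeriv_fun_sum hsmooth, mul_sum]
  refine sum_congr rfl fun i _ ↦ ?_
  have hexp : (-1 - k : ℤ) = -((k + 1 : ℕ) : ℤ) := by push_cast; ring
  rw [congrFun (iteratedDeriv_comp_sub_const k Inv.inv (a i)) t, iteratedDeriv_eq_iterate,
    iter_deriv_inv, hexp, zpow_neg, zpow_natCast, inv_pow]

theorem heat_ode_n_three_of_power_sums {K : Type*} [Field K] [CharZero K] (x : Fin 4 → K)
    (d : ℕ → K) (hd : ∀ k, d k = 1 / 4 * ((-1) ^ k * k ! * ∑ i, x i ^ (k + 1))) :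
    d 4 + 20 * d 0 * d 3 - 24 * d 1 * d 2 + 96 * d 0 ^ 2 * d 2 - 144 * d 0 * d 1 ^ 2
      + 64 * (d 1 + d 0 ^ 2) * (d 2 + 6 * d 0 * d 1 + 4 * d 0 ^ 3) = 0 := by
  simp only [hd, Fin.sum_univ_four, factorial]
  push_cast
  ring

/-- `h(t) = (1/4)(1/(t-a₁) + 1/(t-a₂) + 1/(t-a₃) + 1/(t-a₄))` is the general
solution of the fourth-order equation associated with the heat equation for
`n = 3`, `c₅ = -16`:
`h'''' + 20hh''' - 24h'h'' + 96h²h'' - 144h(h')² + 64(h'+h²)(h''+6hh'+4h³) = 0`. -/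
theorem rational_solution_case_n_three
    (a₁ a₂ a₃ a₄ : ℂ) (h : ℂ → ℂ)
    (hh : ∀ t, h t = (1 / 4) *
      (1 / (t - a₁) + 1 / (t - a₂) + 1 / (t - a₃) + 1 / (t - a₄))) :
    ∀ t : ℂ, t ≠ a₁ → t ≠ a₂ → t ≠ a₃ → t ≠ a₄ →
      deriv (deriv (deriv (deriv h))) t + 20 * h t * deriv (deriv (deriv h)) t
        - 24 * deriv h t * deriv (deriv h) t + 96 * h t ^ 2 * deriv (deriv h) t
        - 144 * h t * (deriv h t) ^ 2
        + 64 * (deriv h t + h t ^ 2) *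
            (deriv (deriv h) t + 6 * h t * deriv h t + 4 * h t ^ 3) = 0 := by
  intro t h₁ h₂ h₃ h₄
  set a : Fin 4 → ℂ := ![a₁, a₂, a₃, a₄]
  have hsum : h = fun s ↦ 1 / 4 * ∑ i, (s - a i)⁻¹ := by
    funext s
    simp [hh, a, Fin.sum_univ_four]
  have hpoles : ∀ i ∈ univ, t ≠ a i := by
    simp [a, Fin.forall_fin_succ, h₁, h₂, h₃, h₄]
  refine heat_ode_n_three_of_power_sums (fun i ↦ (t - a i)⁻¹) (fun k ↦ deriv^[k] h t) fun k ↦ ?_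
  rw [hsum, ← iteratedDeriv_eq_iterate, iteratedDeriv_const_mul_field,
    iteratedDeriv_sum_inv_sub _ _ hpoles]
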